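/- Let M ≥ 1, let u_1, …, u_M be real numbers, and let H be an integer with 0 ≤ H ≤ M. Consider the polynomial in the variable b: Q_H(b) = ∑_{A ⊆ {1,…,M}, |A| = H} ∏_{i ∈ A} (b + u_i) · ∏_{j ∉ A} (b − u_j). Then the coefficient of b^M in Q_H equals C(M,H), and the coefficient of b^{M−1} in Q_H equals ( C(M−1, H−1) − C(M−1, H) ) · ∑_{m=1}^{M} u_m, where C(n,k) denotes the binomial coefficient (with the convention C(n,k) = 0 when k < 0 or k > n). -/

import Mathlib

/-!
Each summand of `Q_H` is the monic product `∏ᵢ (b - wᵢ)` with `wᵢ = ∓ uᵢ` according as `i ∈ A`,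
so its two leading coefficients are `1` and `∑_{i ∈ A} uᵢ - ∑_{i ∉ A} uᵢ`. Summing over `A`,
each `uᵢ` appears with sign `+` in `C(M-1, H-1)` summands and with sign `-` in `C(M-1, H)`.
-/

open Polynomial

/-- The polynomial `Q_H(b) = ∑_{|A| = H} ∏_{i ∈ A} (b + u_i) ∏_{j ∉ A} (b - u_j)`. -/
noncomputable def Qpoly (M : ℕ) (u : Fin M → ℝ) (H : ℕ) : Polynomial ℝ :=
  ∑ A ∈ Finset.powersetCard H (Finset.univ : Finset (Fin M)),
    (∏ i ∈ A, (X + Polynomial.C (u i))) * ∏ j ∈ Aᶜ, (X - Polynomial.C (u j))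

/-- Binomial coefficient `C(n,k)` for an integer `k`, with the convention `C(n,k) = 0` when
`k < 0` or `k > n`. -/
def intChoose (n : ℕ) (k : ℤ) : ℝ :=
  if 0 ≤ k then (n.choose k.toNat : ℝ) else 0

open Finset

lemma intChoose_natCast (n k : ℕ) : intChoose n k = n.choose k := by
  simp [intChoose]

section Counting

variable {α : Type*} [DecidableEq α] {s : Finset α} {i : α}

lemma card_filter_notMem_powersetCard (hi : i ∈ s) (n : ℕ) :
    #{A ∈ s.powersetCard n | i ∉ A} = (#s - 1).choose n := by
  have : {A ∈ s.powersetCard n | i ∉ A} = (s.erase i).powersetCard n := by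
    ext A
    simp [subset_erase, and_right_comm]
  rw [this, card_powersetCard, card_erase_of_mem hi]

lemma card_filter_mem_powersetCard (hi : i ∈ s) (n : ℕ) :
    (#{A ∈ s.powersetCard n | i ∈ A} : ℝ) = intChoose (#s - 1) ((n : ℤ) - 1) := by
  cases n with
  | zero => simp [intChoose]
  | succ k =>
    have h := card_filter_powersetCard_subset {i} s (k + 1) (singleton_subset_iff.2 hi)
      (by simp)
    simp only [singleton_subset_iff, card_singleton, Nat.add_sub_cancel] at h
    simp [h, intChoose]

lemma sum_powersetCard_sum_ite_mem (s : Finset α) (n : ℕ) (u : α → ℝ) :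
    ∑ A ∈ s.powersetCard n, ∑ i ∈ s, (if i ∈ A then u i else -u i) =
      (intChoose (#s - 1) ((n : ℤ) - 1) - intChoose (#s - 1) n) * ∑ i ∈ s, u i := by
  rw [sum_comm, mul_sum]
  refine sum_congr rfl fun i hi => ?_
  rw [sum_ite, sum_const, sum_const, nsmul_eq_mul, nsmul_eq_mul, card_filter_mem_powersetCard hi,
    card_filter_notMem_powersetCard hi, intChoose_natCast]
  ring

end Counting

section Polynomial

variable {R : Type*} [CommRing R]

lemma coeff_card_prod_X_sub_C {ι : Type*} (s : Finset ι) (f : ι → R) :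
    (∏ i ∈ s, (X - C (f i))).coeff #s = 1 := by
  nontriviality R
  rw [← natDegree_finsetProd_X_sub_C_eq_card s f]
  exact (monic_prod_X_sub_C f s).coeff_natDegree

lemma prod_X_add_C_mul_prod_compl_X_sub_C {ι : Type*} [Fintype ι] [DecidableEq ι]
    (A : Finset ι) (u : ι → R) :
    (∏ i ∈ A, (X + C (u i))) * ∏ j ∈ Aᶜ, (X - C (u j)) =
      ∏ i, (X - C (if i ∈ A then -u i else u i)) := by
  rw [← prod_mul_prod_compl A]
  congr 1 <;> refine prod_congr rfl fun i hi => ?_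
  · simp [hi, sub_eq_add_neg]
  · simp [mem_compl.1 hi]

end Polynomial

theorem stmt_16 (M : ℕ) (hM : 1 ≤ M) (u : Fin M → ℝ) (H : ℕ) :
    (Qpoly M u H).coeff M = (M.choose H : ℝ) ∧
    (Qpoly M u H).coeff (M - 1) =
      (intChoose (M - 1) ((H : ℤ) - 1) - intChoose (M - 1) (H : ℤ)) * ∑ m, u m := by
  have hQ : Qpoly M u H =
      ∑ A ∈ powersetCard H univ, ∏ i, (X - C (if i ∈ A then -u i else u i)) :=
    sum_congr rfl fun A _ => prod_X_add_C_mul_prod_compl_X_sub_C A u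
  have hcard : #(univ : Finset (Fin M)) = M := card_fin M
  rw [hQ, finsetSum_coeff, finsetSum_coeff]
  constructor
  · have top (A : Finset (Fin M)) : (∏ i, (X - C (if i ∈ A then -u i else u i))).coeff M = 1 := by
      simpa [hcard] using coeff_card_prod_X_sub_C univ fun i => if i ∈ A then -u i else u i
    simp [top, hcard]
  · have next (A : Finset (Fin M)) : (∏ i, (X - C (if i ∈ A then -u i else u i))).coeff (M - 1) =
        ∑ i, if i ∈ A then u i else -u i := by
      rw [show M - 1 = #univ - 1 by rw [hcard], prod_X_sub_C_coeff_card_pred _ _ (by rwa [hcard]),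
        ← sum_neg_distrib]
      exact sum_congr rfl fun i _ => by split_ifs <;> simp
    simp only [next]
    simpa [hcard] using sum_powersetCard_sum_ite_mem univ H u
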